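/- Let n ≥ 2 and let N > 1 be a divisor of n. Let φ be a finite-order automorphism of the one-sided shift on (Fin n)^ℕ and let (A, Φ) be a support of φ such that every based circuit of A has orbit length exactly N under Φ. Then there exists a support (Â, Φ̂) of φ such that every edge of Â has orbit length exactly N under Φ̂. -/

import Mathlib

/-- The one-sided shift map on `(Fin n)^ℕ`: `(σ x) i = x (i+1)`. -/
def shiftMap (n : ℕ) : (ℕ → Fin n) → (ℕ → Fin n) := fun x i => x (i + 1)

/-- `b` has orbit length exactly `N` under `f`: `N` is the least `L ≥ 1` with `f^[L] b = b`. -/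
def HasOrbitLen {β : Type*} (f : β → β) (b : β) (N : ℕ) : Prop :=
  IsLeast {L : ℕ | 0 < L ∧ f^[L] b = b} N

/-- An automorphism of the one-sided shift: a homeomorphism commuting with the shift. -/
def IsShiftAut (n : ℕ) (φ : (ℕ → Fin n) ≃ₜ (ℕ → Fin n)) : Prop :=
  ⇑φ ∘ shiftMap n = shiftMap n ∘ ⇑φ

/-- `φ` has finite order. -/
def FiniteOrderAut (n : ℕ) (φ : (ℕ → Fin n) ≃ₜ (ℕ → Fin n)) : Prop :=
  ∃ m : ℕ, 0 < m ∧ (⇑φ)^[m] = id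

/-- Extension of the transition function of an automaton to words (letters read in order). -/
def transStar {n : ℕ} {Q : Type*} (π : Fin n → Q → Q) : List (Fin n) → Q → Q
  | [], q => q
  | x :: w, q => transStar π w (π x q)

/-- The automaton `(Q, π)` is synchronizing at level `k` with synchronizing map `s`. -/
def SyncAtLevelWith {n : ℕ} {Q : Type*} (π : Fin n → Q → Q) (k : ℕ)
    (s : List (Fin n) → Q) : Prop :=
  ∀ w : List (Fin n), w.length = k → ∀ q : Q, transStar π w q = s w

/-- The synchronizing map `s` at level `k` is surjective (the automaton is core). -/
def CoreAt {n : ℕ} {Q : Type*} (s : List (Fin n) → Q) (k : ℕ) : Prop :=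
  ∀ q : Q, ∃ w : List (Fin n), w.length = k ∧ s w = q

/-- An automorphism of the underlying digraph of the automaton `(Q, π)`. -/
structure DigraphAut {Q : Type*} (n : ℕ) (π : Fin n → Q → Q) where
  α : Q ≃ Q
  lab : Q → Equiv.Perm (Fin n)
  compat : ∀ (x : Fin n) (q : Q), π (lab q x) (α q) = α (π x q)

/-- Action of a digraph automorphism on the edge set `Q × Fin n`. -/
def edgeMap {Q : Type*} {n : ℕ} {π : Fin n → Q → Q} (Φ : DigraphAut n π) :
    Q × Fin n → Q × Fin n :=
  fun e => (Φ.α e.1, Φ.lab e.1 e.2)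

/-- The output word map `Λ` of a digraph automorphism. -/
def outWord {Q : Type*} {n : ℕ} (π : Fin n → Q → Q) (lab : Q → Equiv.Perm (Fin n)) :
    List (Fin n) → Q → List (Fin n)
  | [], _ => []
  | x :: w, q => lab q x :: outWord π lab w (π x q)

/-- Action of a digraph automorphism on based circuits: `(q, w) ↦ (α q, Λ(w, q))`. -/
def circMap {Q : Type*} {n : ℕ} {π : Fin n → Q → Q} (Φ : DigraphAut n π) :
    Q × List (Fin n) → Q × List (Fin n) :=
  fun c => (Φ.α c.1, outWord π Φ.lab c.2 c.1)

/-- `(q, w)` is a based circuit: `w` nonempty and `π*(w, q) = q`. -/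
def IsBasedCircuit {Q : Type*} {n : ℕ} (π : Fin n → Q → Q) (c : Q × List (Fin n)) : Prop :=
  c.2 ≠ [] ∧ transStar π c.2 c.1 = c.1

/-- The sliding block code induced by an automaton synchronizing at level `k`
with synchronizing map `s` and digraph automorphism with labelling `lab`:
`(F x) i = lab q_i (x i)` where `q_i = s [x(i+k), x(i+k-1), …, x(i+1)]`. -/
def inducedMap {Q : Type*} {n : ℕ} (k : ℕ) (s : List (Fin n) → Q)
    (lab : Q → Equiv.Perm (Fin n)) : (ℕ → Fin n) → (ℕ → Fin n) :=
  fun x i => lab (s (List.ofFn fun j : Fin k => x (i + k - (j : ℕ)))) (x i)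

/-- `(A, Φ)` (with `A` synchronizing and core) is a support of the shift automorphism `φ`. -/
def IsSupport {Q : Type*} (n : ℕ) (π : Fin n → Q → Q) (Φ : DigraphAut n π)
    (φ : (ℕ → Fin n) ≃ₜ (ℕ → Fin n)) : Prop :=
  ∃ (k : ℕ) (s : List (Fin n) → Q), SyncAtLevelWith π k s ∧ CoreAt s k ∧
    inducedMap k s Φ.lab = ⇑φ

/-- The permutation automorphism of the shift induced by a permutation of `Fin n`. -/
def permAutMap {n : ℕ} (ρ : Equiv.Perm (Fin n)) : (ℕ → Fin n) → (ℕ → Fin n) :=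
  fun x i => ρ (x i)

/-- `t` is heavy for `(A, Φ, N)` with divisibility constant `b`. -/
def Heavy {Q : Type*} {n : ℕ} (π : Fin n → Q → Q) (Φ : DigraphAut n π)
    (N b : ℕ) (t : Q) : Prop :=
  b ∣ N ∧ b ≠ N ∧ (∀ r : ℕ, HasOrbitLen (⇑Φ.α) t r → r ∣ b) ∧
  ∀ (q : Q) (x : Fin n), π x q = t →
    ∀ L : ℕ, HasOrbitLen (edgeMap Φ) (q, x) L → Nat.lcm L b = N

section Aux
variable {Q : Type*} {n : ℕ} {π : Fin n → Q → Q}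

lemma transStar_append (u v : List (Fin n)) (q : Q) :
    transStar π (u ++ v) q = transStar π v (transStar π u q) := by
  induction u generalizing q with
  | nil => rfl
  | cons x u ih => simp [transStar, ih]

lemma outWord_length (lab : Q → Equiv.Perm (Fin n)) (w : List (Fin n)) (q : Q) :
    (outWord π lab w q).length = w.length := by
  induction w generalizing q with
  | nil => rfl
  | cons x w ih => simp [outWord, ih]

lemma outWord_append (lab : Q → Equiv.Perm (Fin n)) (u v : List (Fin n)) (q : Q) :
    outWord π lab (u ++ v) q = outWord π lab u q ++ outWord π lab v (transStar π u q) := by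
  induction u generalizing q with
  | nil => rfl
  | cons x u ih => simp [outWord, transStar, ih]

lemma outWord_inj (lab : Q → Equiv.Perm (Fin n)) :
    ∀ (w w' : List (Fin n)) (q : Q), w.length = w'.length →
      outWord π lab w q = outWord π lab w' q → w = w'
  | [], [], _, _, _ => rfl
  | x :: w, x' :: w', q, hl, h => by
      simp only [outWord, List.cons.injEq] at h
      obtain ⟨h1, h2⟩ := h
      have hx : x = x' := (lab q).injective h1
      subst hx
      simp only [List.length_cons, Nat.add_right_cancel_iff] at hl
      exact congrArg _ (outWord_inj lab w w' (π x q) hl h2)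

variable (Φ : DigraphAut n π)

lemma edgeMap_iterate_fst (L : ℕ) (e : Q × Fin n) :
    ((edgeMap Φ)^[L] e).1 = (⇑Φ.α)^[L] e.1 := by
  induction L generalizing e with
  | zero => rfl
  | succ L ih =>
      rw [Function.iterate_succ_apply, Function.iterate_succ_apply, ih]
      rfl

lemma edgeMap_iterate_tgt (L : ℕ) (e : Q × Fin n) :
    π ((edgeMap Φ)^[L] e).2 ((edgeMap Φ)^[L] e).1 = (⇑Φ.α)^[L] (π e.2 e.1) := by
  induction L generalizing e with
  | zero => rfl
  | succ L ih =>
      rw [Function.iterate_succ_apply, Function.iterate_succ_apply]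
      rw [show edgeMap Φ e = (Φ.α e.1, Φ.lab e.1 e.2) from rfl, ih]
      simp [Φ.compat]

lemma circMap_iterate_fst (L : ℕ) (c : Q × List (Fin n)) :
    ((circMap Φ)^[L] c).1 = (⇑Φ.α)^[L] c.1 := by
  induction L generalizing c with
  | zero => rfl
  | succ L ih =>
      rw [Function.iterate_succ_apply, Function.iterate_succ_apply, ih]
      rfl

lemma circMap_iterate_nil (L : ℕ) (q : Q) :
    (circMap Φ)^[L] (q, ([] : List (Fin n))) = ((⇑Φ.α)^[L] q, []) := by
  induction L generalizing q with
  | zero => rfl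
  | succ L ih =>
      rw [Function.iterate_succ_apply]
      rw [show circMap Φ (q, ([] : List (Fin n))) = (Φ.α q, []) from rfl, ih]
      rw [Function.iterate_succ_apply]

lemma circMap_iterate_cons (L : ℕ) (q : Q) (x : Fin n) (w : List (Fin n)) :
    (circMap Φ)^[L] (q, x :: w) =
      ((⇑Φ.α)^[L] q,
        ((edgeMap Φ)^[L] (q, x)).2 :: ((circMap Φ)^[L] (π x q, w)).2) := by
  induction L generalizing q x w with
  | zero => rfl
  | succ L ih =>
      rw [Function.iterate_succ_apply', ih]
      have h1 : ((edgeMap Φ)^[L] (q, x)).1 = (⇑Φ.α)^[L] q := edgeMap_iterate_fst Φ L _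
      have h2 : ((circMap Φ)^[L] (π x q, w)).1 = (⇑Φ.α)^[L] (π x q) :=
        circMap_iterate_fst Φ L _
      have h3 : π ((edgeMap Φ)^[L] (q, x)).2 ((edgeMap Φ)^[L] (q, x)).1
          = (⇑Φ.α)^[L] (π x q) := edgeMap_iterate_tgt Φ L (q, x)
      show (Φ.α _, outWord π Φ.lab _ _) = _
      simp only [outWord]
      refine Prod.ext ?_ (List.cons_eq_cons.mpr ⟨?_, ?_⟩)
      · show Φ.α ((⇑Φ.α)^[L] q) = _
        rw [Function.iterate_succ_apply']
      · show Φ.lab ((⇑Φ.α)^[L] q) ((edgeMap Φ)^[L] (q, x)).2 = ((edgeMap Φ)^[L+1] (q, x)).2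
        rw [Function.iterate_succ_apply']
        show _ = (Φ.lab _ _ : Fin n)
        rw [h1]
      · show outWord π Φ.lab ((circMap Φ)^[L] (π x q, w)).2 _ = ((circMap Φ)^[L+1] (π x q, w)).2
        rw [Function.iterate_succ_apply']
        show _ = outWord π Φ.lab ((circMap Φ)^[L] (π x q, w)).2 (((circMap Φ)^[L] (π x q, w)).1)
        rw [h2, ← h1, h3]

def EdgesFixed (Φ : DigraphAut n π) (L : ℕ) (q : Q) (w : List (Fin n)) : Prop :=
  ∀ u (y : Fin n) v, w = u ++ y :: v →
    (edgeMap Φ)^[L] (transStar π u q, y) = (transStar π u q, y)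

lemma circ_fix_iff (L : ℕ) (q : Q) (w : List (Fin n)) :
    (circMap Φ)^[L] (q, w) = (q, w) ↔ (⇑Φ.α)^[L] q = q ∧ EdgesFixed Φ L q w := by
  induction w generalizing q with
  | nil =>
      rw [circMap_iterate_nil]
      constructor
      · intro h
        refine ⟨(Prod.ext_iff.mp h).1, ?_⟩
        intro u y v huv
        exact absurd huv (by simp)
      · intro ⟨h, _⟩; rw [h]
  | cons x w ih =>
      rw [circMap_iterate_cons]
      constructor
      · intro h
        obtain ⟨hq, htl⟩ := Prod.ext_iff.mp h
        simp only at hq htl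
        obtain ⟨hx, hw⟩ := List.cons_eq_cons.mp htl
        have hedge : (edgeMap Φ)^[L] (q, x) = (q, x) := by
          refine Prod.ext ?_ hx
          rw [edgeMap_iterate_fst]; exact hq
        have htgt : (⇑Φ.α)^[L] (π x q) = π x q := by
          have := edgeMap_iterate_tgt Φ L (q, x)
          rw [hedge] at this; exact this.symm
        have hfix : (circMap Φ)^[L] (π x q, w) = (π x q, w) := by
          refine Prod.ext ?_ hw
          rw [circMap_iterate_fst]; exact htgt
        have hrest := (ih (π x q)).mp hfix
        refine ⟨hq, ?_⟩
        intro u y v huv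
        cases u with
        | nil =>
            obtain ⟨h1, h2⟩ := List.cons_eq_cons.mp huv
            subst h1; subst h2
            exact hedge
        | cons a u' =>
            obtain ⟨h1, h2⟩ := List.cons_eq_cons.mp huv
            subst h1
            show (edgeMap Φ)^[L] (transStar π u' (π x q), y) = _
            exact hrest.2 u' y v h2
      · intro ⟨hq, hE⟩
        have hedge : (edgeMap Φ)^[L] (q, x) = (q, x) := hE [] x w rfl
        have htgt : (⇑Φ.α)^[L] (π x q) = π x q := by
          have := edgeMap_iterate_tgt Φ L (q, x)
          rw [hedge] at this; exact this.symm
        have hrest : (circMap Φ)^[L] (π x q, w) = (π x q, w) := by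
          refine (ih (π x q)).mpr ⟨htgt, ?_⟩
          intro u y v huv
          exact hE (x :: u) y v (by rw [huv]; rfl)
        rw [hq, hedge, hrest]

end Aux

section Win
variable {Q : Type*} {n : ℕ} (π : Fin n → Q → Q) (Φ : DigraphAut n π) (m : ℕ)

/-- Sliding windows of length `m+1`. -/
abbrev Win (n m : ℕ) : Type := {l : List (Fin n) // l.length = m + 1}

lemma Win.ne_nil (v : Win n m) : v.1 ≠ [] := by
  intro h
  have := v.2
  rw [h] at this
  simp at this

instance : Finite (Win n m) :=
  inferInstanceAs (Finite (List.Vector (Fin n) (m+1)))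

def winPi : Fin n → Q × Win n m → Q × Win n m := fun y p =>
  (π (p.2.1.head (Win.ne_nil m p.2)) p.1,
    ⟨p.2.1.tail ++ [y], by simp [p.2.2]⟩)

def winLab : Q × Win n m → Equiv.Perm (Fin n) := fun p => Φ.lab (transStar π p.2.1 p.1)

def winAlphaFun : Q × Win n m → Q × Win n m := fun p =>
  (Φ.α p.1, ⟨outWord π Φ.lab p.2.1 p.1, by rw [outWord_length]; exact p.2.2⟩)

lemma winAlphaFun_injective : Function.Injective (winAlphaFun π Φ m) := by
  intro ⟨q, v⟩ ⟨r, u⟩ h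
  obtain ⟨h1, h2⟩ := Prod.ext_iff.mp h
  simp only [winAlphaFun] at h1 h2
  have hq : q = r := Φ.α.injective h1
  subst hq
  have hlist : v.1 = u.1 :=
    outWord_inj Φ.lab v.1 u.1 q (by rw [v.2, u.2]) (congrArg Subtype.val h2)
  exact Prod.ext rfl (Subtype.ext hlist)

noncomputable def winAut [Finite Q] : DigraphAut n (winPi π m) where
  α := Equiv.ofBijective (winAlphaFun π Φ m)
    (Finite.injective_iff_bijective.mp (winAlphaFun_injective π Φ m))
  lab := winLab π Φ m
  compat := by
    rintro y ⟨q, ⟨l, hl⟩⟩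
    cases l with
    | nil => simp at hl
    | cons a t =>
      show winPi π m _ (winAlphaFun π Φ m (q, ⟨a :: t, hl⟩)) = winAlphaFun π Φ m (winPi π m _ (q, ⟨a :: t, hl⟩))
      refine Prod.ext ?_ (Subtype.ext ?_)
      · show π ((Φ.lab q a :: outWord π Φ.lab t (π a q)).head _) (Φ.α q)
            = Φ.α (π ((a :: t).head _) q)
        exact Φ.compat a q
      · show (Φ.lab q a :: outWord π Φ.lab t (π a q)).tail ++ [winLab π Φ m (q, ⟨a :: t, hl⟩) y]
            = outWord π Φ.lab ((a :: t).tail ++ [y]) (π ((a :: t).head _) q)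
        rw [List.tail_cons, List.head_cons, List.tail_cons, outWord_append]
        simp [winLab, outWord, transStar]

lemma winAut_alpha_apply [Finite Q] (p : Q × Win n m) :
    (winAut π Φ m).α p = winAlphaFun π Φ m p := rfl

end Win

section Slide
variable {Q : Type*} {n : ℕ} (π : Fin n → Q → Q) (Φ : DigraphAut n π) (m : ℕ)

lemma winTrans_fst (u : List (Fin n)) (q : Q) (v : Win n m) :
    (transStar (winPi π m) u (q, v)).1 = transStar π ((v.1 ++ u).take u.length) q := by
  induction u generalizing q v with
  | nil => simp [transStar]
  | cons y u ih =>
    obtain ⟨l, hl⟩ := v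
    cases l with
    | nil => simp at hl
    | cons a t =>
      show (transStar (winPi π m) u
        (π a q, ⟨t ++ [y], by simpa using hl⟩)).1 = _
      rw [ih]
      show transStar π (((t ++ [y]) ++ u).take u.length) (π a q)
        = transStar π (((a :: t) ++ y :: u).take (u.length + 1)) q
      rw [List.cons_append, List.take_succ_cons]
      show _ = transStar π ((t ++ y :: u).take u.length) (π a q)
      rw [List.append_assoc]
      rfl

lemma winTrans_snd (u : List (Fin n)) (q : Q) (v : Win n m) :
    (transStar (winPi π m) u (q, v)).2.1 = (v.1 ++ u).drop u.length := by
  induction u generalizing q v with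
  | nil => simp [transStar]
  | cons y u ih =>
    obtain ⟨l, hl⟩ := v
    cases l with
    | nil => simp at hl
    | cons a t =>
      show (transStar (winPi π m) u
        (π a q, ⟨t ++ [y], by simpa using hl⟩)).2.1 = _
      rw [ih]
      show ((t ++ [y]) ++ u).drop u.length = ((a :: t) ++ y :: u).drop (u.length + 1)
      rw [List.cons_append, List.drop_succ_cons, List.append_assoc]
      rfl

def winEmbed : (Q × Win n m) × Fin n → Q × List (Fin n) :=
  fun e => (e.1.1, e.1.2.1 ++ [e.2])

lemma winEmbed_injective : Function.Injective (winEmbed (Q := Q) (n := n) (m := m)) := by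
  intro ⟨⟨q, v⟩, y⟩ ⟨⟨r, u⟩, z⟩ h
  obtain ⟨h1, h2⟩ := Prod.ext_iff.mp h
  simp only [winEmbed] at h1 h2
  obtain ⟨hv, hy⟩ := List.append_inj h2 (by rw [v.2, u.2])
  simp only [List.cons.injEq] at hy
  exact Prod.ext (Prod.ext h1 (Subtype.ext hv)) hy.1

lemma winEmbed_semiconj [Finite Q] (e : (Q × Win n m) × Fin n) :
    winEmbed m (edgeMap (winAut π Φ m) e) = circMap Φ (winEmbed m e) := by
  obtain ⟨⟨q, v⟩, y⟩ := e
  show (Φ.α q, outWord π Φ.lab v.1 q ++ [Φ.lab (transStar π v.1 q) y])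
      = (Φ.α q, outWord π Φ.lab (v.1 ++ [y]) q)
  rw [outWord_append]
  rfl

lemma winEmbed_iterate [Finite Q] (L : ℕ) (e : (Q × Win n m) × Fin n) :
    winEmbed m ((edgeMap (winAut π Φ m))^[L] e) = (circMap Φ)^[L] (winEmbed m e) := by
  induction L generalizing e with
  | zero => rfl
  | succ L ih =>
    rw [Function.iterate_succ_apply, Function.iterate_succ_apply, ih,
      winEmbed_semiconj π Φ m e]

end Slide

theorem exists_support_with_all_edges_orbit_len
    (n N : ℕ) (hn : 2 ≤ n) (hN : 1 < N) (hdvd : N ∣ n)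
    (φ : (ℕ → Fin n) ≃ₜ (ℕ → Fin n)) (hφ : IsShiftAut n φ)
    (hfin : FiniteOrderAut n φ)
    (Q : Type) [Fintype Q] [Nonempty Q] (π : Fin n → Q → Q)
    (Φ : DigraphAut n π) (hsupp : IsSupport n π Φ φ)
    (hcirc : ∀ c : Q × List (Fin n), IsBasedCircuit π c →
      HasOrbitLen (circMap Φ) c N) :
    ∃ (Q' : Type) (_ : Fintype Q') (_ : Nonempty Q') (π' : Fin n → Q' → Q')
      (Φ' : DigraphAut n π'),
      IsSupport n π' Φ' φ ∧ ∀ e : Q' × Fin n, HasOrbitLen (edgeMap Φ') e N := by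
  classical
  obtain ⟨k, s, hsync, hcore, hind⟩ := hsupp
  obtain ⟨m, hcard⟩ : ∃ m, Fintype.card Q = m + 1 :=
    ⟨Fintype.card Q - 1, (Nat.succ_pred_eq_of_pos Fintype.card_pos).symm⟩
  have hn0 : 0 < n := by omega
  let y₀ : Fin n := ⟨0, hn0⟩
  refine ⟨Q × Win n m, Fintype.ofFinite _,
    ⟨(Classical.arbitrary Q, ⟨List.replicate (m+1) y₀, by simp⟩)⟩,
    winPi π m, winAut π Φ m, ?_, ?_⟩
  · -- IsSupport
    refine ⟨k + (m+1), fun u => (s (u.take k),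
      if h : (u.drop k).length = m + 1 then ⟨u.drop k, h⟩
      else ⟨List.replicate (m+1) y₀, by simp⟩), ?_, ?_, ?_⟩
    · -- synchronizing
      intro u hu p
      obtain ⟨q, v⟩ := p
      have hv : v.1.length = m + 1 := v.2
      have htk : (u.take k).length = k := by rw [List.length_take]; omega
      have hdk : (u.drop k).length = m + 1 := by rw [List.length_drop]; omega
      refine Prod.ext ?_ (Subtype.ext ?_)
      · rw [winTrans_fst]
        have h1 : (v.1 ++ u).take u.length = v.1 ++ u.take k := by
          rw [hu, show k + (m+1) = v.1.length + k from by rw [hv]; omega]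
          exact List.take_length_add_append k
        rw [h1, transStar_append, hsync (u.take k) htk]
      · rw [winTrans_snd]
        have h2 : (v.1 ++ u).drop u.length = u.drop k := by
          rw [hu, show k + (m+1) = v.1.length + k from by rw [hv]; omega]
          exact List.drop_length_add_append k
        rw [h2]
        simp only [dif_pos hdk]
    · -- core
      intro p
      obtain ⟨q, v⟩ := p
      obtain ⟨w, hw, hsw⟩ := hcore q
      refine ⟨w ++ v.1, by simp [hw, v.2], ?_⟩
      have h1 : (w ++ v.1).take k = w := by rw [← hw]; exact List.take_left
      have h2 : (w ++ v.1).drop k = v.1 := by rw [← hw]; exact List.drop_left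
      refine Prod.ext ?_ (Subtype.ext ?_)
      · show s ((w ++ v.1).take k) = q
        rw [h1, hsw]
      · simp only [h2, dif_pos v.2]
    · -- induced map
      have r₀ : Q := Classical.arbitrary Q
      funext x i
      simp only [inducedMap]
      set W' := List.ofFn (fun j : Fin (k + (m+1)) => x (i + (k + (m+1)) - (j:ℕ))) with hW'
      have hW'len : W'.length = k + (m+1) := by rw [hW', List.length_ofFn]
      have htk : (W'.take k).length = k := by rw [List.length_take]; omega
      have hdk : (W'.drop k).length = m + 1 := by rw [List.length_drop]; omega
      simp only [winLab, dif_pos hdk]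
      have e1 : transStar π (W'.drop k) (s (W'.take k)) = transStar π W' r₀ := by
        rw [← hsync (W'.take k) htk r₀, ← transStar_append, List.take_append_drop]
      have e2 : transStar π W' r₀ = s (W'.drop (m+1)) := by
        conv_lhs => rw [← List.take_append_drop (m+1) W']
        rw [transStar_append, hsync (W'.drop (m+1)) (by rw [List.length_drop]; omega)]
      have hW : W'.drop (m+1) = List.ofFn (fun j : Fin k => x (i + k - (j:ℕ))) := by
        apply List.ext_getElem
        · rw [List.length_drop, hW'len, List.length_ofFn]; omega
        · intro j h1 h2
          have hjk : j < k := by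
            rw [List.length_drop, hW'len] at h1; omega
          simp only [hW', List.getElem_drop, List.getElem_ofFn]
          congr 1
          omega
      show Φ.lab (transStar π (W'.drop k) (s (W'.take k))) (x i) = φ x i
      rw [e1, e2, hW]
      exact congrFun (congrFun hind x) i
  · -- all edges have orbit length exactly N
    intro e
    obtain ⟨⟨q, v⟩, y⟩ := e
    set w : List (Fin n) := v.1 ++ [y] with hwdef
    have hwlen : w.length = m + 2 := by rw [hwdef]; simp [v.2]
    have hiter : ∀ L : ℕ,
        ((edgeMap (winAut π Φ m))^[L] ((q,v),y) = ((q,v),y)) ↔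
          (circMap Φ)^[L] (q, w) = (q, w) := by
      intro L
      constructor
      · intro h
        have h2 := winEmbed_iterate π Φ m L ((q,v),y)
        rw [h] at h2
        exact h2.symm
      · intro h
        apply winEmbed_injective m
        rw [winEmbed_iterate]
        exact h
    have hEdgesN : EdgesFixed Φ N q w := by
      intro u y' v' huv
      obtain ⟨z, hz, hsz⟩ := hcore (transStar π u q)
      have hc : IsBasedCircuit π (transStar π u q, y' :: z) := by
        refine ⟨by simp, ?_⟩
        show transStar π z (π y' (transStar π u q)) = transStar π u q
        rw [hsync z hz]; exact hsz
      have hfix : (circMap Φ)^[N] (transStar π u q, y' :: z)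
          = (transStar π u q, y' :: z) := (hcirc _ hc).1.2
      exact ((circ_fix_iff Φ N _ _).mp hfix).2 [] y' z rfl
    have hwne : w ≠ [] := by
      intro h; rw [h] at hwlen; simp at hwlen
    obtain ⟨a, t, hat⟩ := List.exists_cons_of_ne_nil hwne
    have hαN : (⇑Φ.α)^[N] q = q := by
      have h0 := hEdgesN [] a t hat
      have h1 := edgeMap_iterate_fst Φ N (q, a)
      rw [show transStar π ([] : List (Fin n)) q = q from rfl] at h0
      rw [h0] at h1
      exact h1.symm
    refine ⟨⟨by omega, (hiter N).mpr ((circ_fix_iff Φ N q w).mpr ⟨hαN, hEdgesN⟩)⟩, ?_⟩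
    rintro L ⟨hL0, hLfix⟩
    obtain ⟨hαL, hE⟩ := (circ_fix_iff Φ L q w).mp ((hiter L).mp hLfix)
    obtain ⟨i, j, hij, hgij⟩ : ∃ i j : Fin (m+3), (i:ℕ) < (j:ℕ) ∧
        transStar π (w.take (i:ℕ)) q = transStar π (w.take (j:ℕ)) q := by
      obtain ⟨t1, t2, hne, heq⟩ := Fintype.exists_ne_map_eq_of_card_lt
        (fun t : Fin (m+3) => transStar π (w.take (t:ℕ)) q)
        (by rw [Fintype.card_fin, hcard]; omega)
      rcases Ne.lt_or_gt hne with h | h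
      · exact ⟨t1, t2, h, heq⟩
      · exact ⟨t2, t1, h, heq.symm⟩
    set i' := (i : ℕ) with hi'
    set j' := (j : ℕ) with hj'
    have hj2 : j' ≤ m + 2 := by have := j.isLt; omega
    set sub := (w.drop i').take (j' - i') with hsub
    have hsubdecomp : w.take j' = w.take i' ++ sub := by
      rw [hsub, show j' = i' + (j' - i') from by omega]
      rw [show i' + (j' - i') - i' = j' - i' from by omega]
      exact List.take_add (l := w) (i := i') (j := j' - i')
    have hw2 : w = w.take i' ++ (sub ++ w.drop j') := by
      conv_lhs => rw [← List.take_append_drop j' w]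
      rw [hsubdecomp, List.append_assoc]
    have hsublen : sub.length = j' - i' := by
      rw [hsub, List.length_take, List.length_drop, hwlen]; omega
    have hsubne : sub ≠ [] := by
      intro h; rw [h] at hsublen; simp at hsublen; omega
    have hri : transStar π sub (transStar π (w.take i') q) = transStar π (w.take i') q := by
      rw [← transStar_append, ← hsubdecomp]
      exact hgij.symm
    have hE' : EdgesFixed Φ L (transStar π (w.take i') q) sub := by
      intro u' y' v' h'
      have hw3 : w = (w.take i' ++ u') ++ y' :: (v' ++ w.drop j') := by
        conv_lhs => rw [hw2, h']
        simp [List.append_assoc]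
      have hfix := hE _ y' _ hw3
      rw [transStar_append] at hfix
      exact hfix
    have hαL' : (⇑Φ.α)^[L] (transStar π (w.take i') q) = transStar π (w.take i') q := by
      obtain ⟨a', t', hat'⟩ := List.exists_cons_of_ne_nil hsubne
      have h0 := hE' [] a' t' hat'
      have h1 := edgeMap_iterate_fst Φ L (transStar π (w.take i') q, a')
      rw [show transStar π ([] : List (Fin n)) (transStar π (w.take i') q)
        = transStar π (w.take i') q from rfl] at h0
      rw [h0] at h1
      exact h1.symm
    have hcfix : (circMap Φ)^[L] (transStar π (w.take i') q, sub)
        = (transStar π (w.take i') q, sub) :=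
      (circ_fix_iff Φ L _ _).mpr ⟨hαL', hE'⟩
    exact (hcirc _ ⟨hsubne, hri⟩).2 ⟨hL0, hcfix⟩
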